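/- Every P2-admissible curve that starts in the set B₂ remains in B₂: if q = (x,y,z) : [0,T] → ℝ³ is P2-admissible and q(0) ∈ B₂, then q(t) ∈ B₂ for all t ∈ [0,T]. In particular, every P2-admissible curve starting at the origin (0,0,0) stays in B₂ for all time. -/

import Mathlib

open MeasureTheory Set

noncomputable section

/-- A curve `(x, y, z) : [0, T] → ℝ³` is admissible for the second flat sub-Lorentzian
problem on the Martinet distribution: it is Lipschitz on `[0, T]` and for a.e.
`t ∈ [0, T]` it is differentiable with `x' ≥ |y'|` and `z' = x² y' / 2`. -/
def P2Admissible (T : ℝ) (x y z : ℝ → ℝ) : Prop :=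
  0 ≤ T ∧
  (∃ K : NNReal, LipschitzOnWith K x (Icc 0 T) ∧ LipschitzOnWith K y (Icc 0 T) ∧
    LipschitzOnWith K z (Icc 0 T)) ∧
  ∀ᵐ t ∂(volume.restrict (Icc 0 T)),
    HasDerivAt x (deriv x t) t ∧ HasDerivAt y (deriv y t) t ∧ HasDerivAt z (deriv z t) t ∧
    |deriv y t| ≤ deriv x t ∧ deriv z t = (x t) ^ 2 * deriv y t / 2

/-- The sub-Lorentzian length of an admissible curve of the second problem. -/
def P2Length (T : ℝ) (x y : ℝ → ℝ) : ℝ :=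
  ∫ t in (0:ℝ)..T, Real.sqrt ((deriv x t) ^ 2 - (deriv y t) ^ 2)

/-- `q₁` is reachable from the origin by a P2-admissible curve. -/
def P2Reaches (q₁ : ℝ × ℝ × ℝ) : Prop :=
  ∃ (T : ℝ) (x y z : ℝ → ℝ), P2Admissible T x y z ∧
    x 0 = 0 ∧ y 0 = 0 ∧ z 0 = 0 ∧ (x T, y T, z T) = q₁

/-- The sub-Lorentzian distance from the origin in the second problem: the supremum
of lengths of P2-admissible curves from the origin to `q₁` (`0` if there are none). -/
def P2dist (q₁ : ℝ × ℝ × ℝ) : ℝ :=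
  sSup (insert 0 {l : ℝ | ∃ (T : ℝ) (x y z : ℝ → ℝ), P2Admissible T x y z ∧
    x 0 = 0 ∧ y 0 = 0 ∧ z 0 = 0 ∧ (x T, y T, z T) = q₁ ∧ l = P2Length T x y})

/-- The candidate attainable set `B₂` of the second problem. -/
def B2 : Set (ℝ × ℝ × ℝ) :=
  {p | |p.2.1| ≤ p.1 ∧ ((p.1 + p.2.1) ^ 3 - 4 * p.1 ^ 3) / 24 ≤ p.2.2 ∧
    p.2.2 ≤ (4 * p.1 ^ 3 - (p.1 - p.2.1) ^ 3) / 24}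

/-!
Along an admissible curve `x - y` and `x + y` are nondecreasing, which preserves `|y| ≤ x`.
Given that, `z - ((x + y)³ - 4x³)/24` has derivative `(x' + y')(x - y)(3x + y)/8 ≥ 0`, so the
lower bound on `z` persists; the reflection `(x, y, z) ↦ (x, -y, -z)` preserves admissibility
and exchanges the two bounds defining `B₂`. An a.e. sign of the derivative suffices because
Lipschitz functions are absolutely continuous, hence integrals of their derivatives.
-/

namespace AbsolutelyContinuousOnInterval

variable {a b : ℝ} {f : ℝ → ℝ}

theorem fun_pow (hf : AbsolutelyContinuousOnInterval f a b) :
    ∀ n : ℕ, AbsolutelyContinuousOnInterval (fun t => f t ^ n) a b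
  | 0 => by
    simpa using (LipschitzWith.const (1 : ℝ)).lipschitzOnWith.absolutelyContinuousOnInterval
  | n + 1 => by simpa only [pow_succ] using (hf.fun_pow n).fun_mul hf

theorem monotoneOn_of_ae_deriv_nonneg (hf : AbsolutelyContinuousOnInterval f a b)
    (hd : ∀ᵐ t ∂volume.restrict (Icc a b), 0 ≤ deriv f t) : MonotoneOn f (Icc a b) := by
  intro s hs t ht hst
  have hsub : Icc s t ⊆ Icc a b := Icc_subset_Icc hs.1 ht.2
  have hfst : AbsolutelyContinuousOnInterval f s t :=
    hf.mono (by rw [uIcc_of_le hst]; exact hsub.trans Icc_subset_uIcc)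
  rw [← sub_nonneg, ← hfst.integral_deriv_eq_sub]
  exact intervalIntegral.integral_nonneg_of_ae_restrict hst
    (ae_restrict_of_ae_restrict_of_subset hsub hd)

end AbsolutelyContinuousOnInterval

namespace P2Admissible

variable {T : ℝ} {x y z : ℝ → ℝ}

theorem absolutelyContinuousOnInterval (h : P2Admissible T x y z) :
    AbsolutelyContinuousOnInterval x 0 T ∧ AbsolutelyContinuousOnInterval y 0 T ∧
      AbsolutelyContinuousOnInterval z 0 T := by
  obtain ⟨hT, ⟨K, hx, hy, hz⟩, -⟩ := h
  rw [← uIcc_of_le hT] at hx hy hz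
  exact ⟨hx.absolutelyContinuousOnInterval, hy.absolutelyContinuousOnInterval,
    hz.absolutelyContinuousOnInterval⟩

theorem reflect (h : P2Admissible T x y z) :
    P2Admissible T x (fun t => -y t) (fun t => -z t) := by
  obtain ⟨hT, ⟨K, hx, hy, hz⟩, hae⟩ := h
  refine ⟨hT, ⟨K, hx, hy.neg, hz.neg⟩, ?_⟩
  filter_upwards [hae] with t ht
  obtain ⟨hdx, hdy, hdz, hxy, hzy⟩ := ht
  simp only [deriv.fun_neg]
  exact ⟨hdx, hdy.neg, hdz.neg, by rwa [abs_neg], by rw [hzy]; ring⟩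

theorem monotoneOn_sub (h : P2Admissible T x y z) :
    MonotoneOn (fun t => x t - y t) (Icc 0 T) := by
  obtain ⟨hx, hy, -⟩ := h.absolutelyContinuousOnInterval
  refine (hx.fun_sub hy).monotoneOn_of_ae_deriv_nonneg ?_
  filter_upwards [h.2.2] with t ht
  obtain ⟨hdx, hdy, -, hxy, -⟩ := ht
  rw [(hdx.fun_sub hdy).deriv]
  linarith [(abs_le.mp hxy).2]

theorem abs_le_of_abs_le_zero (h : P2Admissible T x y z) (h0 : |y 0| ≤ x 0) {t : ℝ}
    (ht : t ∈ Icc 0 T) : |y t| ≤ x t := by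
  have h0T : (0 : ℝ) ∈ Icc 0 T := ⟨le_rfl, h.1⟩
  have hsub := h.monotoneOn_sub h0T ht ht.1
  have hadd := h.reflect.monotoneOn_sub h0T ht ht.1
  simp only [sub_neg_eq_add] at hsub hadd
  rw [abs_le] at h0 ⊢
  constructor <;> linarith

theorem monotoneOn_lowerBound (h : P2Admissible T x y z)
    (hxy : ∀ t ∈ Icc 0 T, |y t| ≤ x t) :
    MonotoneOn (fun t => z t - ((x t + y t) ^ 3 - 4 * x t ^ 3) / 24) (Icc 0 T) := by
  obtain ⟨hx, hy, hz⟩ := h.absolutelyContinuousOnInterval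
  have hac : AbsolutelyContinuousOnInterval
      (fun t => z t - ((x t + y t) ^ 3 - 4 * x t ^ 3) / 24) 0 T := by
    simp only [div_eq_inv_mul _ (24 : ℝ)]
    exact hz.fun_sub ((((hx.fun_add hy).fun_pow 3).fun_sub
      ((hx.fun_pow 3).const_mul 4)).const_mul 24⁻¹)
  refine hac.monotoneOn_of_ae_deriv_nonneg ?_
  filter_upwards [h.2.2, ae_restrict_mem measurableSet_Icc] with t hd ht
  obtain ⟨hdx, hdy, hdz, hy', hz'⟩ := hd
  have hderiv : HasDerivAt (fun t => z t - ((x t + y t) ^ 3 - 4 * x t ^ 3) / 24)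
      ((deriv x t + deriv y t) * (x t - y t) * (3 * x t + y t) / 8) t := by
    refine (hdz.sub ((((hdx.fun_add hdy).fun_pow 3).sub
      ((hdx.fun_pow 3).const_mul 4)).div_const 24)).congr_deriv ?_
    rw [hz']
    ring
  rw [hderiv.deriv]
  obtain ⟨hlo, hhi⟩ := abs_le.mp (hxy t ht)
  have hdxy : 0 ≤ deriv x t + deriv y t := by linarith [(abs_le.mp hy').1]
  have hxmy : 0 ≤ x t - y t := by linarith
  have h3xy : 0 ≤ 3 * x t + y t := by linarith
  positivity

end P2Admissible

/-- Every P2-admissible curve starting in `B₂` remains in `B₂`. -/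
theorem B2_invariant (T : ℝ) (x y z : ℝ → ℝ) (h : P2Admissible T x y z)
    (h0 : (x 0, y 0, z 0) ∈ B2) :
    ∀ t ∈ Icc (0:ℝ) T, (x t, y t, z t) ∈ B2 := by
  obtain ⟨hxy0, hlow0, hup0⟩ := h0
  have hxy : ∀ t ∈ Icc (0 : ℝ) T, |y t| ≤ x t := fun t ht => h.abs_le_of_abs_le_zero hxy0 ht
  have hlow := h.monotoneOn_lowerBound hxy
  have hup := h.reflect.monotoneOn_lowerBound (by simpa only [abs_neg] using hxy)
  have h0T : (0 : ℝ) ∈ Icc 0 T := ⟨le_rfl, h.1⟩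
  intro t ht
  refine ⟨hxy t ht, ?_, ?_⟩
  · linarith [hlow h0T ht ht.1]
  · linear_combination hup0 + hup h0T ht ht.1
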